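/- Let N ≥ 1, let u : ℝ^N → ℝ be bounded and upper semicontinuous, let r > 0, and let x₀ ∈ ℝ^N. Suppose (p, X) ∈ J^{2,+} u^r(x₀), where u^r is the sup-convolution of u. Then, setting y₀ = x₀ + r² p, one has u^r(x₀) = u(y₀) − (r²/2)|p|² and (p, X) ∈ J^{2,+} u(y₀). -/

import Mathlib

open scoped RealInnerProductSpace Topology
open Filter Asymptotics Metric MeasureTheory

noncomputable section

/-- Euclidean space ℝ^N. -/
abbrev E (N : ℕ) : Type := EuclideanSpace ℝ (Fin N)

/-- Sup-convolution `u^r(x) = sup_y (u(y) - |x-y|²/(2r²))`. -/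
def supConv {N : ℕ} (u : E N → ℝ) (r : ℝ) (x : E N) : ℝ :=
  ⨆ y : E N, (u y - ‖x - y‖ ^ 2 / (2 * r ^ 2))

/-- `(p, X)` belongs to the second-order superjet `J^{2,+} w (x)`:
`X` is symmetric and `w(x+h) ≤ w(x) + ⟨p,h⟩ + (1/2)⟨Xh,h⟩ + o(‖h‖²)` as `h → 0`. -/
def InSuperjet {N : ℕ} (w : E N → ℝ) (x : E N) (p : E N) (X : E N →ₗ[ℝ] E N) : Prop :=
  X.IsSymmetric ∧ ∃ e : E N → ℝ, e =o[𝓝 (0 : E N)] (fun h => ‖h‖ ^ 2) ∧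
    ∀ᶠ h in 𝓝 (0 : E N), w (x + h) ≤ w x + ⟪p, h⟫ + (1 / 2) * ⟪X h, h⟫ + e h

/-!
Since `u` is upper semicontinuous and bounded above while the penalty `|x₀ - y|² / (2r²)` is
coercive, the supremum defining `u^r(x₀)` is attained at some `ŷ`. The paraboloid
`x ↦ u(ŷ) - |x - ŷ|² / (2r²)` touches `u^r` from below at `x₀`, and `(p, X)` bounds `u^r` from
above to second order; comparing the two leaves `⟪(ŷ - x₀) / r² - p, h⟫ ≤ o(|h|)`, which forces
`ŷ = x₀ + r² p`. Translating the contact point, `u(ŷ + h) - |x₀ - ŷ|² / (2r²) ≤ u^r(x₀ + h)`, so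
every superjet of `u^r` at `x₀` is a superjet of `u` at `ŷ`.
-/

section InnerProductSpace

variable {F : Type*} [NormedAddCommGroup F] [InnerProductSpace ℝ F]

theorem eq_zero_of_inner_le_isLittleO {v : F} {f : F → ℝ} (hf : f =o[𝓝 0] fun h => h)
    (hle : ∀ᶠ h in 𝓝 0, ⟪v, h⟫ ≤ f h) : v = 0 := by
  have hf0 : f 0 = 0 := hf.isBigO.eq_zero_imp.self_of_nhds rfl
  have hderiv : HasFDerivAt f (0 : F →L[ℝ] ℝ) 0 :=
    hasFDerivAt_iff_isLittleO_nhds_zero.2 (by simpa [hf0] using hf)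
  have hmax : IsLocalMax (fun h => ⟪v, h⟫ - f h) 0 := by
    filter_upwards [hle] with h hh
    simp [hf0, hh]
  have := hmax.hasFDerivAt_eq_zero (((innerSL ℝ v).hasFDerivAt).sub hderiv)
  simpa using congrArg (fun L : F →L[ℝ] ℝ => L v) this

theorem LinearMap.isBigO_inner_apply_self [FiniteDimensional ℝ F] (X : F →ₗ[ℝ] F) (l : Filter F) :
    (fun h => ⟪X h, h⟫) =O[l] fun h => ‖h‖ ^ 2 := by
  refine IsBigO.of_bound ‖LinearMap.toContinuousLinearMap X‖ (Eventually.of_forall fun h => ?_)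
  calc ‖⟪X h, h⟫‖ ≤ ‖X h‖ * ‖h‖ := norm_inner_le_norm _ _
    _ ≤ ‖LinearMap.toContinuousLinearMap X‖ * ‖h‖ * ‖h‖ := by
      gcongr; exact (LinearMap.toContinuousLinearMap X).le_opNorm h
    _ = _ := by simp [sq, mul_assoc]

end InnerProductSpace

theorem UpperSemicontinuous.exists_forall_le_of_isBounded {α : Type*} [PseudoMetricSpace α]
    [ProperSpace α] {g : α → ℝ} (hg : UpperSemicontinuous g) (x : α)
    (hb : Bornology.IsBounded {y | g x ≤ g y}) : ∃ a, ∀ y, g y ≤ g a := by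
  obtain ⟨a, -, ha⟩ := (hg.upperSemicontinuousOn _).exists_isMaxOn ⟨x, le_refl (g x)⟩
    (isCompact_of_isClosed_isBounded (hg.isClosed_preimage (g x)) hb)
  refine ⟨a, fun y => ?_⟩
  rcases le_total (g x) (g y) with hy | hy
  · exact ha hy
  · exact hy.trans (ha (le_refl (g x)))

section supConv

variable {N : ℕ} {u : E N → ℝ} {r : ℝ}

theorem le_supConv (hu : BddAbove (Set.range u)) (x y : E N) :
    u y - ‖x - y‖ ^ 2 / (2 * r ^ 2) ≤ supConv u r x := by
  refine le_ciSup (f := fun y => u y - ‖x - y‖ ^ 2 / (2 * r ^ 2)) ?_ y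
  obtain ⟨M, hM⟩ := hu
  refine ⟨M, ?_⟩
  rintro _ ⟨z, rfl⟩
  have hz := hM ⟨z, rfl⟩
  have : 0 ≤ ‖x - z‖ ^ 2 / (2 * r ^ 2) := by positivity
  linarith

theorem exists_supConv_eq (hu : BddAbove (Set.range u)) (husc : UpperSemicontinuous u)
    (hr : r ≠ 0) (x : E N) : ∃ y, supConv u r x = u y - ‖x - y‖ ^ 2 / (2 * r ^ 2) := by
  obtain ⟨M, hM⟩ := hu
  set g : E N → ℝ := fun y => u y - ‖x - y‖ ^ 2 / (2 * r ^ 2)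
  have hg : UpperSemicontinuous g := husc.add (by fun_prop : Continuous fun y : E N =>
    -(‖x - y‖ ^ 2 / (2 * r ^ 2))).upperSemicontinuous
  have hbdd : Bornology.IsBounded {y | g x ≤ g y} := by
    refine (isBounded_closedBall (x := x) (r := √(2 * r ^ 2 * (M - u x)))).subset fun y hgy => ?_
    have hy : u x ≤ u y - ‖x - y‖ ^ 2 / (2 * r ^ 2) := by simpa [g] using hgy
    have huy := hM ⟨y, rfl⟩
    have hr2 : 0 < 2 * r ^ 2 := by positivity
    rw [mem_closedBall, dist_comm, dist_eq_norm]
    refine Real.le_sqrt_of_sq_le ?_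
    rw [mul_comm]
    exact (div_le_iff₀ hr2).1 (by linarith)
  obtain ⟨a, ha⟩ := hg.exists_forall_le_of_isBounded x hbdd
  exact ⟨a, le_antisymm (ciSup_le ha) (le_supConv ⟨M, hM⟩ x a)⟩

theorem inSuperjet_of_supConv_eq (hu : BddAbove (Set.range u)) {x y p : E N}
    {X : E N →ₗ[ℝ] E N} (hy : supConv u r x = u y - ‖x - y‖ ^ 2 / (2 * r ^ 2))
    (hpX : InSuperjet (supConv u r) x p X) : InSuperjet u y p X := by
  obtain ⟨hX, e, he, hev⟩ := hpX
  refine ⟨hX, e, he, ?_⟩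
  filter_upwards [hev] with h hh
  have hle := le_supConv (r := r) hu (x + h) (y + h)
  rw [show x + h - (y + h) = x - y by abel] at hle
  linarith

theorem eq_add_smul_of_supConv_eq (hu : BddAbove (Set.range u)) (hr : r ≠ 0) {x y p : E N}
    {X : E N →ₗ[ℝ] E N} (hy : supConv u r x = u y - ‖x - y‖ ^ 2 / (2 * r ^ 2))
    (hpX : InSuperjet (supConv u r) x p X) : y = x + r ^ 2 • p := by
  obtain ⟨-, e, he, hev⟩ := hpX
  have hsq : (fun h : E N => ‖h‖ ^ 2) =o[𝓝 0] fun h => h := isLittleO_norm_pow_id one_lt_two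
  have hq : (r ^ 2)⁻¹ • (y - x) - p = 0 := by
    refine eq_zero_of_inner_le_isLittleO
      (f := fun h => (1 / 2) * ⟪X h, h⟫ + e h + (2 * r ^ 2)⁻¹ * ‖h‖ ^ 2) ?_ ?_
    · exact ((((X.isBigO_inner_apply_self _).trans_isLittleO hsq).const_mul_left _).add
        (he.trans hsq)).add (hsq.const_mul_left _)
    · filter_upwards [hev] with h hh
      have hle := le_supConv (r := r) hu (x + h) y
      rw [show x + h - y = (x - y) + h by abel, norm_add_sq_real] at hle
      rw [inner_sub_left, real_inner_smul_left, ← neg_sub x y, inner_neg_left]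
      simp only [div_eq_mul_inv, mul_inv] at hle hy ⊢
      linear_combination hle + hh + hy
  rw [sub_eq_zero, inv_smul_eq_iff₀ (pow_ne_zero 2 hr)] at hq
  exact eq_add_of_sub_eq' hq

end supConv

theorem supConv_superjet_general (N : ℕ) (u : E N → ℝ)
    (hb : ∃ M : ℝ, ∀ x, |u x| ≤ M) (husc : UpperSemicontinuous u)
    (r : ℝ) (hr : 0 < r) (x₀ p : E N) (X : E N →ₗ[ℝ] E N)
    (hpX : InSuperjet (supConv u r) x₀ p X) :
    supConv u r x₀ = u (x₀ + r ^ 2 • p) - (r ^ 2 / 2) * ‖p‖ ^ 2 ∧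
    InSuperjet u (x₀ + r ^ 2 • p) p X := by
  obtain ⟨M, hM⟩ := hb
  have hu : BddAbove (Set.range u) := ⟨M, by rintro _ ⟨x, rfl⟩; exact (abs_le.1 (hM x)).2⟩
  obtain ⟨y, hy⟩ := exists_supConv_eq hu husc hr.ne' x₀
  obtain rfl := eq_add_smul_of_supConv_eq hu hr.ne' hy hpX
  refine ⟨?_, inSuperjet_of_supConv_eq hu hy hpX⟩
  rw [hy, sub_add_cancel_left, norm_neg, norm_smul, Real.norm_eq_abs, abs_of_pos (by positivity)]
  field_simp

/-- Magic property of sup-convolutions: if `(p, X) ∈ J^{2,+} u^r(x₀)` then, with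
`y₀ = x₀ + r²p`, one has `u^r(x₀) = u(y₀) - (r²/2)|p|²` and `(p, X) ∈ J^{2,+} u(y₀)`. -/
theorem supConv_superjet (N : ℕ) (hN : 1 ≤ N) (u : E N → ℝ)
    (hb : ∃ M : ℝ, ∀ x, |u x| ≤ M) (husc : UpperSemicontinuous u)
    (r : ℝ) (hr : 0 < r) (x₀ p : E N) (X : E N →ₗ[ℝ] E N)
    (hpX : InSuperjet (supConv u r) x₀ p X) :
    supConv u r x₀ = u (x₀ + r ^ 2 • p) - (r ^ 2 / 2) * ‖p‖ ^ 2 ∧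
    InSuperjet u (x₀ + r ^ 2 • p) p X :=
  supConv_superjet_general N u hb husc r hr x₀ p X hpX
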